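/- Every atomic Boolean subspace lattice 𝔅 in a complex Banach space is strongly reflexive: N_* = N for all N ∈ 𝔅, where N_* = ⋀{M₋ : M ∈ 𝔅, M ⊄ N}; consequently 𝔅 equals the lattice of closed subspaces invariant under all rank-one operators of Alg(𝔅). -/
import Mathlib


open ContinuousLinearMap

/-- The closed linear span (join) of a family of subspaces. -/
noncomputable def cJoin {X : Type*} [NormedAddCommGroup X] [NormedSpace ℂ X]
    (S : Set (Submodule ℂ X)) : Submodule ℂ X :=
  (sSup S).topologicalClosure

/-- Join of two subspaces in the lattice of closed subspaces. -/
noncomputable def cJoin2 {X : Type*} [NormedAddCommGroup X] [NormedSpace ℂ X]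
    (M N : Submodule ℂ X) : Submodule ℂ X :=
  (M ⊔ N).topologicalClosure

/-- A subspace lattice: a complete lattice of closed subspaces containing the trivial ones. -/
def IsSubspaceLattice {X : Type*} [NormedAddCommGroup X] [NormedSpace ℂ X]
    (L : Set (Submodule ℂ X)) : Prop :=
  (∀ M ∈ L, IsClosed (M : Set X)) ∧ ⊥ ∈ L ∧ ⊤ ∈ L ∧
    ∀ S ⊆ L, cJoin S ∈ L ∧ sInf S ∈ L

/-- Alg(F): bounded operators leaving every member of F invariant. -/
def algOf {X : Type*} [NormedAddCommGroup X] [NormedSpace ℂ X]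
    (L : Set (Submodule ℂ X)) : Set (X →L[ℂ] X) :=
  {A | ∀ M ∈ L, ∀ x ∈ M, A x ∈ M}

/-- Lat(T): closed subspaces invariant under every operator in T. -/
def latOf {X : Type*} [NormedAddCommGroup X] [NormedSpace ℂ X]
    (T : Set (X →L[ℂ] X)) : Set (Submodule ℂ X) :=
  {M | IsClosed (M : Set X) ∧ ∀ A ∈ T, ∀ x ∈ M, A x ∈ M}

/-- The rank-one operator e ⊗ η : x ↦ η(x) • e. -/
noncomputable def rankOne {X : Type*} [NormedAddCommGroup X] [NormedSpace ℂ X]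
    (e : X) (η : X →L[ℂ] ℂ) : X →L[ℂ] X :=
  η.smulRight e

/-- The rank-one operators in a set of operators. -/
noncomputable def Rk1 {X : Type*} [NormedAddCommGroup X] [NormedSpace ℂ X]
    (T : Set (X →L[ℂ] X)) : Set (X →L[ℂ] X) :=
  {A ∈ T | ∃ (e : X) (η : X →L[ℂ] ℂ), e ≠ 0 ∧ η ≠ 0 ∧ A = rankOne e η}

/-- M₋ = ⋁{K ∈ L : M ⊄ K}. -/
noncomputable def mMinus {X : Type*} [NormedAddCommGroup X] [NormedSpace ℂ X]
    (L : Set (Submodule ℂ X)) (M : Submodule ℂ X) : Submodule ℂ X :=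
  cJoin {K | K ∈ L ∧ ¬ M ≤ K}

/-- M₊ = ⋀{K ∈ L : K ⊄ M}. -/
noncomputable def mPlus {X : Type*} [NormedAddCommGroup X] [NormedSpace ℂ X]
    (L : Set (Submodule ℂ X)) (M : Submodule ℂ X) : Submodule ℂ X :=
  sInf {K | K ∈ L ∧ ¬ K ≤ M}

/-- N_* = ⋀{M₋ : M ∈ L, M ⊄ N}. -/
noncomputable def nStar {X : Type*} [NormedAddCommGroup X] [NormedSpace ℂ X]
    (L : Set (Submodule ℂ X)) (N : Submodule ℂ X) : Submodule ℂ X :=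
  sInf {P | ∃ M, M ∈ L ∧ ¬ M ≤ N ∧ P = mMinus L M}

/-- The cyclic subspace [Alg(L)x]: closed linear span of the orbit of x under Alg(L). -/
noncomputable def cyclicSubspace {X : Type*} [NormedAddCommGroup X] [NormedSpace ℂ X]
    (L : Set (Submodule ℂ X)) (x : X) : Submodule ℂ X :=
  (Submodule.span ℂ ((fun A : X →L[ℂ] X => A x) '' algOf L)).topologicalClosure

/-- The pinch points of a family of subspaces. -/
def pinOf {X : Type*} [NormedAddCommGroup X] [NormedSpace ℂ X]
    (L : Set (Submodule ℂ X)) : Set (Submodule ℂ X) :=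
  {P | P ∈ L ∧ ∀ M ∈ L, M ≤ P ∨ P ≤ M}


/-- An atom of a subspace lattice: a nontrivial minimal element. -/
def IsLatAtom {X : Type*} [NormedAddCommGroup X] [NormedSpace ℂ X]
    (L : Set (Submodule ℂ X)) (K : Submodule ℂ X) : Prop :=
  K ∈ L ∧ K ≠ ⊥ ∧ K ≠ ⊤ ∧ ∀ B ∈ L, B ≤ K → B = ⊥ ∨ B = K

/-- A Boolean subspace lattice with complementation map `c`: distributive and
(uniquely) complemented. -/
def IsBooleanSubspaceLattice {X : Type*} [NormedAddCommGroup X] [NormedSpace ℂ X]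
    (L : Set (Submodule ℂ X)) (c : Submodule ℂ X → Submodule ℂ X) : Prop :=
  IsSubspaceLattice L ∧
  (∀ M ∈ L, ∀ N ∈ L, ∀ K ∈ L, M ⊓ cJoin2 N K = cJoin2 (M ⊓ N) (M ⊓ K)) ∧
  (∀ M ∈ L, ∀ N ∈ L, ∀ K ∈ L, cJoin2 M (N ⊓ K) = cJoin2 M N ⊓ cJoin2 M K) ∧
  (∀ M ∈ L, c M ∈ L ∧ M ⊓ c M = ⊥ ∧ cJoin2 M (c M) = ⊤) ∧
  (∀ M ∈ L, ∀ N ∈ L, M ⊓ N = ⊥ → cJoin2 M N = ⊤ → N = c M)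

/-- An atomic Boolean subspace lattice: every element is the join of the atoms below it. -/
def IsAtomicBooleanSubspaceLattice {X : Type*} [NormedAddCommGroup X] [NormedSpace ℂ X]
    (L : Set (Submodule ℂ X)) (c : Submodule ℂ X → Submodule ℂ X) : Prop :=
  IsBooleanSubspaceLattice L c ∧
  ∀ M ∈ L, M = cJoin {K | IsLatAtom L K ∧ K ≤ M}

section Aux

variable {X : Type*} [NormedAddCommGroup X] [NormedSpace ℂ X]

lemma cJoin_le {S : Set (Submodule ℂ X)} {M : Submodule ℂ X} (hM : IsClosed (M : Set X))
    (h : ∀ K ∈ S, K ≤ M) : cJoin S ≤ M :=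
  Submodule.topologicalClosure_minimal _ (sSup_le h) hM

lemma le_cJoin {S : Set (Submodule ℂ X)} {K : Submodule ℂ X} (hK : K ∈ S) : K ≤ cJoin S :=
  (le_sSup hK).trans (Submodule.le_topologicalClosure _)

lemma cJoin_mono {S T : Set (Submodule ℂ X)} (h : S ⊆ T) : cJoin S ≤ cJoin T :=
  Submodule.topologicalClosure_mono (sSup_le_sSup h)

lemma cJoin2_bot_left {P : Submodule ℂ X} (hP : IsClosed (P : Set X)) : cJoin2 ⊥ P = P := by
  unfold cJoin2
  rw [bot_sup_eq]
  exact hP.submodule_topologicalClosure_eq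

/-- Hahn–Banach: a continuous functional vanishing on a closed subspace but not at `x ∉ p`. -/
lemma exists_functional_of_notMem {p : Submodule ℂ X} (hp : IsClosed (p : Set X)) {x : X}
    (hx : x ∉ p) : ∃ η : X →L[ℂ] ℂ, (∀ y ∈ p, η y = 0) ∧ η x = 1 := by
  haveI : IsClosed (p : Set X) := hp
  have hxQ : (Submodule.Quotient.mk x : X ⧸ p) ≠ 0 := by
    simpa [Submodule.Quotient.mk_eq_zero] using hx
  obtain ⟨f, hf⟩ := SeparatingDual.exists_eq_one (R := ℂ) hxQ
  have hcont : Continuous (p.mkQ) := continuous_quot_mk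
  refine ⟨f.comp ⟨p.mkQ, hcont⟩, fun y hy => ?_, ?_⟩
  · have : p.mkQ y = 0 := (Submodule.Quotient.mk_eq_zero p).2 hy
    simp [this]
  · simpa using hf

end Aux

/-- Every atomic Boolean subspace lattice is strongly reflexive; consequently it equals the
lattice of closed subspaces invariant under all rank-one operators of its algebra. -/
theorem atomicBoolean_stronglyReflexive
    {X : Type*} [NormedAddCommGroup X] [NormedSpace ℂ X] [CompleteSpace X]
    (L : Set (Submodule ℂ X)) (c : Submodule ℂ X → Submodule ℂ X)
    (hB : IsAtomicBooleanSubspaceLattice L c) :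
    (∀ N ∈ L, nStar L N = N) ∧ latOf (Rk1 (algOf L)) = L := by
  obtain ⟨⟨⟨hcl, hbot, htop, hlat⟩, hdist, _hdist2, hcomp, _huniq⟩, hatomic⟩ := hB
  -- atoms meet members they are not below trivially
  have h1 : ∀ E, IsLatAtom L E → ∀ K ∈ L, ¬ E ≤ K → E ⊓ K = ⊥ := by
    intro E hE K hK hEK
    have hmem : E ⊓ K ∈ L := by
      have := (hlat {E, K} (by rintro P (rfl | rfl); exacts [hE.1, hK])).2
      rwa [sInf_pair] at this
    rcases hE.2.2.2 (E ⊓ K) hmem inf_le_left with h | h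
    · exact h
    · exact absurd (inf_eq_left.1 h) hEK
  -- if an atom meets K trivially, then K is below the complement of the atom
  have h2 : ∀ E, IsLatAtom L E → ∀ K ∈ L, E ⊓ K = ⊥ → K ≤ c E := by
    intro E hE K hK hEK
    obtain ⟨hcE, _hEcE, hEtop⟩ := hcomp E hE.1
    have hd := hdist K hK E hE.1 (c E) hcE
    rw [hEtop, inf_top_eq, inf_comm K E, hEK, cJoin2_bot_left
      ((hcl K hK).inter (hcl (c E) hcE))] at hd
    exact inf_eq_left.1 hd.symm
  -- an atom is never below its own complement
  have h2' : ∀ E, IsLatAtom L E → ¬ E ≤ c E := by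
    intro E hE hle
    obtain ⟨_, hEcE, _⟩ := hcomp E hE.1
    exact hE.2.1 (by rw [← hEcE, inf_eq_left.2 hle])
  -- if K is not below the complement of an atom E, then E ≤ K
  have h2'' : ∀ E, IsLatAtom L E → ∀ K ∈ L, ¬ K ≤ c E → E ≤ K := by
    intro E hE K hK h
    by_contra hEK
    exact h (h2 E hE K hK (h1 E hE K hK hEK))
  -- existence of atoms witnessing non-inclusions
  have h3 : ∀ M ∈ L, ∀ N : Submodule ℂ X, IsClosed (N : Set X) → ¬ M ≤ N →
      ∃ E, IsLatAtom L E ∧ E ≤ M ∧ ¬ E ≤ N := by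
    intro M hM N hNcl hMN
    by_contra h
    push_neg at h
    refine hMN ?_
    rw [hatomic M hM]
    refine cJoin_le hNcl ?_
    rintro K ⟨hK, hKM⟩
    exact h K hK hKM
  -- mMinus of an atom is below its complement
  have h5 : ∀ E, IsLatAtom L E → mMinus L E ≤ c E := by
    intro E hE
    refine cJoin_le (hcl (c E) (hcomp E hE.1).1) ?_
    rintro K ⟨hK, hEK⟩
    exact h2 E hE K hK (h1 E hE K hK hEK)
  -- the complement of an atom below M is below mMinus M
  have h6 : ∀ M ∈ L, ∀ E, IsLatAtom L E → E ≤ M → c E ≤ mMinus L M := by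
    intro M hM E hE hEM
    refine le_cJoin ⟨(hcomp E hE.1).1, fun hMcE => ?_⟩
    exact h2' E hE (hEM.trans hMcE)
  have part1 : ∀ N ∈ L, nStar L N = N := by
    intro N hN
    refine le_antisymm ?_ (le_sInf ?_)
    · -- nStar L N ≤ N
      set S : Set (Submodule ℂ X) := {P | ∃ E, IsLatAtom L E ∧ ¬ E ≤ N ∧ P = c E} with hS
      have hSL : S ⊆ L := by
        rintro P ⟨E, hE, _, rfl⟩
        exact (hcomp E hE.1).1
      have hDL : sInf S ∈ L := (hlat S hSL).2
      have step1 : nStar L N ≤ sInf S := by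
        refine le_sInf ?_
        rintro P ⟨E, hE, hEN, rfl⟩
        have : nStar L N ≤ mMinus L E := sInf_le ⟨E, hE.1, hEN, rfl⟩
        exact this.trans (h5 E hE)
      have step2 : sInf S ≤ N := by
        by_contra h
        obtain ⟨F, hF, hFD, hFN⟩ := h3 (sInf S) hDL N (hcl N hN) h
        have hle : sInf S ≤ c F := sInf_le ⟨F, hF, hFN, rfl⟩
        exact h2' F hF (hFD.trans hle)
      exact step1.trans step2
    · -- N ≤ nStar L N
      rintro P ⟨M, hM, hMN, rfl⟩
      obtain ⟨E, hE, hEM, hEN⟩ := h3 M hM N (hcl N hN) hMN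
      have hNcE : N ≤ c E := h2 E hE N hN (h1 E hE N hN hEN)
      exact hNcE.trans (h6 M hM E hE hEM)
  refine ⟨part1, Set.Subset.antisymm ?_ ?_⟩
  · -- latOf (Rk1 (algOf L)) ⊆ L
    rintro M ⟨hMcl, hMinv⟩
    -- key: if M is not below c E for an atom E, then E ≤ M
    have key : ∀ E, IsLatAtom L E → ¬ M ≤ c E → E ≤ M := by
      intro E hE hMcE
      obtain ⟨x, hxM, hxcE⟩ := SetLike.not_le_iff_exists.1 hMcE
      obtain ⟨η, hη0, hηx⟩ :=
        exists_functional_of_notMem (hcl (c E) (hcomp E hE.1).1) hxcE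
      have hηne : η ≠ 0 := fun h => by simp [h] at hηx
      intro e he
      rcases eq_or_ne e 0 with rfl | hene
      · exact M.zero_mem
      · -- the rank one e ⊗ η belongs to Alg L
        have hAalg : rankOne e η ∈ algOf L := by
          intro P hP y hy
          show η y • e ∈ P
          rcases eq_or_ne (η y) 0 with h0 | h0
          · simp [h0]
          · have hPcE : ¬ P ≤ c E := fun hle => h0 (hη0 y (hle hy))
            exact Submodule.smul_mem _ _ (h2'' E hE P hP hPcE he)
        have := hMinv (rankOne e η) ⟨hAalg, e, η, hene, hηne, rfl⟩ x hxM
        simpa [rankOne, hηx] using this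
    set M₀ : Submodule ℂ X := cJoin {K | IsLatAtom L K ∧ K ≤ M} with hM₀
    have hM₀L : M₀ ∈ L :=
      (hlat {K | IsLatAtom L K ∧ K ≤ M} (fun K hK => hK.1.1)).1
    have hM₀M : M₀ ≤ M := cJoin_le hMcl (fun K hK => hK.2)
    set S' : Set (Submodule ℂ X) := {P | ∃ E, IsLatAtom L E ∧ ¬ E ≤ M ∧ P = c E} with hS'
    have hS'L : S' ⊆ L := by
      rintro P ⟨E, hE, _, rfl⟩
      exact (hcomp E hE.1).1
    have hD'L : sInf S' ∈ L := (hlat S' hS'L).2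
    have hMD' : M ≤ sInf S' := by
      refine le_sInf ?_
      rintro P ⟨E, hE, hEM, rfl⟩
      by_contra h
      exact hEM (key E hE h)
    have hD'M₀ : sInf S' ≤ M₀ := by
      calc sInf S' = cJoin {K | IsLatAtom L K ∧ K ≤ sInf S'} := hatomic _ hD'L
        _ ≤ M₀ := by
            refine cJoin_mono ?_
            rintro F ⟨hF, hFD⟩
            refine ⟨hF, ?_⟩
            by_contra hFM
            exact h2' F hF (hFD.trans (sInf_le ⟨F, hF, hFM, rfl⟩))
    have : M = M₀ := le_antisymm (hMD'.trans hD'M₀) hM₀M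
    rw [this]
    exact hM₀L
  · -- L ⊆ latOf (Rk1 (algOf L))
    intro M hM
    exact ⟨hcl M hM, fun A hA x hx => hA.1 M hM x hx⟩
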